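/- arXiv:2511.14651 — 15 statements merged into one kernel-verified Lean document; each statement's English description precedes it below -/
import Mathlib

section
/- Under the square truncated SVD setting with the differential relation and the orthogonality-preserving condition dV⊥†V + V⊥†dV = 0, the discarded-kept cross component of dA satisfies U⊥† dA V = (U⊥† dU) S − S⊥ (V⊥† dV). -/
open Matrix

theorem stmt_2
    {r t : ℕ} (hr : 0 < r) (ht : 0 < t) (htr : t < r)
    (U V : Matrix (Fin r) (Fin t) ℂ)
    (Up Vp : Matrix (Fin r) (Fin (r - t)) ℂ)
    (s : Fin t → ℝ) (sp : Fin (r - t) → ℝ)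
    (S : Matrix (Fin t) (Fin t) ℂ)
    (Sp : Matrix (Fin (r - t)) (Fin (r - t)) ℂ)
    (A dA : Matrix (Fin r) (Fin r) ℂ)
    (dU dV : Matrix (Fin r) (Fin t) ℂ)
    (dS : Matrix (Fin t) (Fin t) ℂ)
    (dUp dVp : Matrix (Fin r) (Fin (r - t)) ℂ)
    (dSp : Matrix (Fin (r - t)) (Fin (r - t)) ℂ)
    (hU : Uᴴ * U = 1) (hV : Vᴴ * V = 1)
    (hUp : Upᴴ * Up = 1) (hVp : Vpᴴ * Vp = 1)
    (hUUp : Uᴴ * Up = 0) (hVVp : Vᴴ * Vp = 0)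
    (hS : S = Matrix.diagonal (fun i => (s i : ℂ)))
    (hSp : Sp = Matrix.diagonal (fun i => (sp i : ℂ)))
    (hA : A = U * S * Vᴴ + Up * Sp * Vpᴴ)
    (hdA : dA = dU * S * Vᴴ + U * dS * Vᴴ + U * S * dVᴴ
        + dUp * Sp * Vpᴴ + Up * dSp * Vpᴴ + Up * Sp * dVpᴴ)
    (hdVpV : dVpᴴ * V + Vpᴴ * dV = 0) :
    Upᴴ * dA * V = (Upᴴ * dU) * S - Sp * (Vpᴴ * dV) := by
  have hUpU : Upᴴ * U = 0 := by
    have := congrArg conjTranspose hUUp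
    simpa [conjTranspose_mul] using this
  have hVpV : Vpᴴ * V = 0 := by
    have := congrArg conjTranspose hVVp
    simpa [conjTranspose_mul] using this
  have hdVp : dVpᴴ * V = -(Vpᴴ * dV) := by
    linear_combination (norm := noncomm_ring) hdVpV
  subst hdA
  simp only [Matrix.mul_add, Matrix.add_mul, Matrix.mul_assoc]
  rw [hV, hVpV, hdVp]
  simp only [← Matrix.mul_assoc, hUpU, hUp]
  simp [Matrix.mul_assoc]
  noncomm_ring
end

section
/- Under the square truncated SVD setting with the differential relation, if additionally dU†U + U†dU = 0, dV†V + V†dV = 0, and dS is diagonal with real entries, then for every index k the diagonal entry of dS satisfies (dS)_{kk} = ½ (U† dA V + V† (dA)† U)_{kk}; that is, dS equals the Hadamard product of the identity 1_t with ½ (U† dA V + V† (dA)† U). -/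
open Matrix

theorem stmt_3
    {r t : ℕ} (hr : 0 < r) (ht : 0 < t) (htr : t < r)
    (U V : Matrix (Fin r) (Fin t) ℂ)
    (Up Vp : Matrix (Fin r) (Fin (r - t)) ℂ)
    (s : Fin t → ℝ) (sp : Fin (r - t) → ℝ)
    (S : Matrix (Fin t) (Fin t) ℂ)
    (Sp : Matrix (Fin (r - t)) (Fin (r - t)) ℂ)
    (A dA : Matrix (Fin r) (Fin r) ℂ)
    (dU dV : Matrix (Fin r) (Fin t) ℂ)
    (dS : Matrix (Fin t) (Fin t) ℂ)
    (dUp dVp : Matrix (Fin r) (Fin (r - t)) ℂ)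
    (dSp : Matrix (Fin (r - t)) (Fin (r - t)) ℂ)
    (hU : Uᴴ * U = 1) (hV : Vᴴ * V = 1)
    (hUp : Upᴴ * Up = 1) (hVp : Vpᴴ * Vp = 1)
    (hUUp : Uᴴ * Up = 0) (hVVp : Vᴴ * Vp = 0)
    (hS : S = Matrix.diagonal (fun i => (s i : ℂ)))
    (hSp : Sp = Matrix.diagonal (fun i => (sp i : ℂ)))
    (hA : A = U * S * Vᴴ + Up * Sp * Vpᴴ)
    (hdA : dA = dU * S * Vᴴ + U * dS * Vᴴ + U * S * dVᴴ
        + dUp * Sp * Vpᴴ + Up * dSp * Vpᴴ + Up * Sp * dVpᴴ)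
    (hdUU : dUᴴ * U + Uᴴ * dU = 0)
    (hdVV : dVᴴ * V + Vᴴ * dV = 0)
    (ds : Fin t → ℝ)
    (hdS : dS = Matrix.diagonal (fun i => (ds i : ℂ))) :
    (∀ k, dS k k = (1 / 2 : ℂ) * (Uᴴ * dA * V + Vᴴ * dAᴴ * U) k k) ∧
      dS = Matrix.hadamard 1 ((1 / 2 : ℂ) • (Uᴴ * dA * V + Vᴴ * dAᴴ * U)) := by

  have hVpV : Vpᴴ * V = 0 := by
    have := congrArg conjTranspose hVVp
    simpa [Matrix.conjTranspose_mul] using this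
  have hU' : ∀ x : Matrix (Fin t) (Fin t) ℂ, Uᴴ * (U * x) = x := fun x => by
    rw [← Matrix.mul_assoc, hU, Matrix.one_mul]
  have hUUp' : ∀ x : Matrix (Fin (r - t)) (Fin t) ℂ, Uᴴ * (Up * x) = 0 := fun x => by
    rw [← Matrix.mul_assoc, hUUp, Matrix.zero_mul]
  have key : Uᴴ * dA * V = Uᴴ * (dU * S) + (dS + S * (dVᴴ * V)) := by
    subst hdA
    simp only [Matrix.add_mul, Matrix.mul_add, Matrix.mul_assoc, hV, hVpV, hU', hUUp',
      Matrix.mul_one, Matrix.mul_zero]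
    abel
  -- entrywise facts
  have hx : ∀ k, (starRingEnd ℂ) ((Uᴴ * dU) k k) = -((Uᴴ * dU) k k) := by
    intro k
    have h1 : (dUᴴ * U) k k + (Uᴴ * dU) k k = 0 := by
      have := congrArg (fun M => M k k) hdUU
      simpa using this
    have h2 : (dUᴴ * U) k k = star ((Uᴴ * dU) k k) := by
      have : (Uᴴ * dU)ᴴ = dUᴴ * U := by
        simp [Matrix.conjTranspose_mul]
      rw [← this, Matrix.conjTranspose_apply]
    rw [RCLike.star_def] at h2
    rw [← h2]
    linear_combination h1
  have hy : ∀ k, (starRingEnd ℂ) ((dVᴴ * V) k k) = -((dVᴴ * V) k k) := by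
    intro k
    have h1 : (dVᴴ * V) k k + (Vᴴ * dV) k k = 0 := by
      have := congrArg (fun M => M k k) hdVV
      simpa using this
    have h2 : (Vᴴ * dV) k k = star ((dVᴴ * V) k k) := by
      have : (dVᴴ * V)ᴴ = Vᴴ * dV := by
        simp [Matrix.conjTranspose_mul]
      rw [← this, Matrix.conjTranspose_apply]
    rw [RCLike.star_def] at h2
    rw [h2] at h1
    linear_combination h1
  have hconj : ∀ k, (Vᴴ * dAᴴ * U) k k = star ((Uᴴ * dA * V) k k) := by
    intro k
    have h : Vᴴ * dAᴴ * U = (Uᴴ * dA * V)ᴴ := by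
      simp [Matrix.conjTranspose_mul, Matrix.mul_assoc]
    rw [h, Matrix.conjTranspose_apply]
  have hz : ∀ k, (Uᴴ * dA * V) k k
      = (Uᴴ * dU) k k * (s k : ℂ) + ((ds k : ℂ) + (s k : ℂ) * (dVᴴ * V) k k) := by
    intro k
    have := congrArg (fun M => M k k) key
    rw [this]
    rw [← Matrix.mul_assoc, hS, hdS]
    simp [Matrix.mul_diagonal, Matrix.diagonal_mul, Matrix.diagonal_apply_eq]
  have part1 : ∀ k, dS k k = (1 / 2 : ℂ) * (Uᴴ * dA * V + Vᴴ * dAᴴ * U) k k := by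
    intro k
    rw [Matrix.add_apply, hconj k, hz k]
    rw [hdS]
    simp only [Matrix.diagonal_apply_eq, RCLike.star_def, map_add, _root_.map_mul,
      Complex.conj_ofReal, hx k, hy k]
    ring
  refine ⟨part1, ?_⟩
  ext i j
  by_cases h : i = j
  · subst h
    rw [Matrix.hadamard_apply, Matrix.one_apply_eq, one_mul, Matrix.smul_apply,
      smul_eq_mul]
    exact part1 i
  · rw [Matrix.hadamard_apply, Matrix.one_apply_ne h, zero_mul, hdS,
      Matrix.diagonal_apply_ne _ h]
end

section
/- Under the square truncated SVD setting with the differential relation, if additionally dU†U + U†dU = 0, dV†V + V†dV = 0, dS is diagonal with real entries, and the squared singular values are nondegenerate (s_i² ≠ s_j² for all i ≠ j), then for all indices i ≠ j the off-diagonal entries of U†dU satisfy (U† dU)_{ij} = (U† dA V S + S V† (dA)† U)_{ij} / (s_j² − s_i²). -/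
open Matrix

theorem stmt_4
    {r t : ℕ} (hr : 0 < r) (ht : 0 < t) (htr : t < r)
    (U V : Matrix (Fin r) (Fin t) ℂ)
    (Up Vp : Matrix (Fin r) (Fin (r - t)) ℂ)
    (s : Fin t → ℝ) (sp : Fin (r - t) → ℝ)
    (S : Matrix (Fin t) (Fin t) ℂ)
    (Sp : Matrix (Fin (r - t)) (Fin (r - t)) ℂ)
    (A dA : Matrix (Fin r) (Fin r) ℂ)
    (dU dV : Matrix (Fin r) (Fin t) ℂ)
    (dS : Matrix (Fin t) (Fin t) ℂ)
    (dUp dVp : Matrix (Fin r) (Fin (r - t)) ℂ)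
    (dSp : Matrix (Fin (r - t)) (Fin (r - t)) ℂ)
    (hU : Uᴴ * U = 1) (hV : Vᴴ * V = 1)
    (hUp : Upᴴ * Up = 1) (hVp : Vpᴴ * Vp = 1)
    (hUUp : Uᴴ * Up = 0) (hVVp : Vᴴ * Vp = 0)
    (hS : S = Matrix.diagonal (fun i => (s i : ℂ)))
    (hSp : Sp = Matrix.diagonal (fun i => (sp i : ℂ)))
    (hA : A = U * S * Vᴴ + Up * Sp * Vpᴴ)
    (hdA : dA = dU * S * Vᴴ + U * dS * Vᴴ + U * S * dVᴴ
        + dUp * Sp * Vpᴴ + Up * dSp * Vpᴴ + Up * Sp * dVpᴴ)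
    (hdUU : dUᴴ * U + Uᴴ * dU = 0)
    (hdVV : dVᴴ * V + Vᴴ * dV = 0)
    (ds : Fin t → ℝ)
    (hdS : dS = Matrix.diagonal (fun i => (ds i : ℂ)))
    (hnd : ∀ i j : Fin t, i ≠ j → (s i) ^ 2 ≠ (s j) ^ 2) :
    ∀ i j : Fin t, i ≠ j →
      (Uᴴ * dU) i j
        = (Uᴴ * dA * V * S + S * Vᴴ * dAᴴ * U) i j / ((s j : ℂ) ^ 2 - (s i : ℂ) ^ 2) := by
  intro i j hij
  have hUpU : Upᴴ * U = 0 := by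
    have h := congrArg conjTranspose hUUp
    simpa using h
  have hVpV : Vpᴴ * V = 0 := by
    have h := congrArg conjTranspose hVVp
    simpa using h
  have hSH : Sᴴ = S := by
    subst hS
    ext a b
    simp [Matrix.conjTranspose_apply, Matrix.diagonal, eq_comm]
    split <;> simp_all
  have hdSH : dSᴴ = dS := by
    subst hdS
    ext a b
    simp [Matrix.conjTranspose_apply, Matrix.diagonal, eq_comm]
    split <;> simp_all
  have hUUm : ∀ {n : ℕ} (M : Matrix (Fin t) (Fin n) ℂ), Uᴴ * (U * M) = M := by
    intro n M; rw [← Matrix.mul_assoc, hU, Matrix.one_mul]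
  have hUUpm : ∀ {n : ℕ} (M : Matrix (Fin (r - t)) (Fin n) ℂ), Uᴴ * (Up * M) = 0 := by
    intro n M; rw [← Matrix.mul_assoc, hUUp, Matrix.zero_mul]
  have hVVm : ∀ {n : ℕ} (M : Matrix (Fin t) (Fin n) ℂ), Vᴴ * (V * M) = M := by
    intro n M; rw [← Matrix.mul_assoc, hV, Matrix.one_mul]
  have hVVpm : ∀ {n : ℕ} (M : Matrix (Fin (r - t)) (Fin n) ℂ), Vᴴ * (Vp * M) = 0 := by
    intro n M; rw [← Matrix.mul_assoc, hVVp, Matrix.zero_mul]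
  have h1 : Uᴴ * dA * V = Uᴴ * dU * S + dS + S * (dVᴴ * V) := by
    subst hdA
    simp only [Matrix.add_mul, Matrix.mul_add, Matrix.mul_assoc, hV, hVpV,
      Matrix.mul_one, Matrix.mul_zero, Matrix.zero_mul, hUUm, hUUpm, add_zero, zero_add]
  have h2 : Vᴴ * dAᴴ * U = S * (dUᴴ * U) + dS + Vᴴ * (dV * S) := by
    subst hdA
    simp only [Matrix.conjTranspose_add, Matrix.conjTranspose_mul,
      Matrix.conjTranspose_conjTranspose, hSH, hdSH,
      Matrix.add_mul, Matrix.mul_add, Matrix.mul_assoc, hU, hUpU,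
      Matrix.mul_one, Matrix.mul_zero, Matrix.zero_mul, hVVm, hVVpm, add_zero, zero_add]
  have hdUU' : dUᴴ * U = -(Uᴴ * dU) := by
    linear_combination (norm := noncomm_ring) hdUU
  have hdVV' : Vᴴ * dV = -(dVᴴ * V) := by
    linear_combination (norm := noncomm_ring) hdVV
  have hX : Uᴴ * dA * V * S + S * Vᴴ * dAᴴ * U
      = Uᴴ * dU * (S * S) - S * S * (Uᴴ * dU) + (dS * S + S * dS) := by
    have : S * Vᴴ * dAᴴ * U = S * (Vᴴ * dAᴴ * U) := by
      simp [Matrix.mul_assoc]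
    rw [this, h1, h2, hdUU']
    have hVdV : Vᴴ * (dV * S) = (Vᴴ * dV) * S := by rw [Matrix.mul_assoc]
    rw [hVdV, hdVV']
    noncomm_ring
  rw [hX]
  have hSS : S * S = Matrix.diagonal (fun i => ((s i : ℂ)) ^ 2) := by
    subst hS
    simp [Matrix.diagonal_mul_diagonal, sq]
  have hdsS : (dS * S + S * dS) i j = 0 := by
    subst hS hdS
    simp [Matrix.diagonal_mul_diagonal, Matrix.diagonal_apply_ne _ hij]
  have hne : ((s j : ℂ)) ^ 2 - ((s i : ℂ)) ^ 2 ≠ 0 := by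
    intro h
    apply hnd i j hij
    have : ((s i : ℂ)) ^ 2 = ((s j : ℂ)) ^ 2 := by linear_combination -h
    exact_mod_cast this
  simp only [Matrix.add_apply, Matrix.sub_apply, hdsS, hSS,
    Matrix.mul_diagonal, Matrix.diagonal_mul, add_zero]
  field_simp
end

section
/- Under the square truncated SVD setting with the differential relation, if additionally dU†U + U†dU = 0, dV†V + V†dV = 0, dS is diagonal with real entries, and the squared singular values are nondegenerate (s_i² ≠ s_j² for all i ≠ j), then for all indices i ≠ j the off-diagonal entries of V†dV satisfy (V† dV)_{ij} = (S U† dA V + V† (dA)† U S)_{ij} / (s_j² − s_i²). -/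
open Matrix

theorem stmt_5
    {r t : ℕ} (hr : 0 < r) (ht : 0 < t) (htr : t < r)
    (U V : Matrix (Fin r) (Fin t) ℂ)
    (Up Vp : Matrix (Fin r) (Fin (r - t)) ℂ)
    (s : Fin t → ℝ) (sp : Fin (r - t) → ℝ)
    (S : Matrix (Fin t) (Fin t) ℂ)
    (Sp : Matrix (Fin (r - t)) (Fin (r - t)) ℂ)
    (A dA : Matrix (Fin r) (Fin r) ℂ)
    (dU dV : Matrix (Fin r) (Fin t) ℂ)
    (dS : Matrix (Fin t) (Fin t) ℂ)
    (dUp dVp : Matrix (Fin r) (Fin (r - t)) ℂ)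
    (dSp : Matrix (Fin (r - t)) (Fin (r - t)) ℂ)
    (hU : Uᴴ * U = 1) (hV : Vᴴ * V = 1)
    (hUp : Upᴴ * Up = 1) (hVp : Vpᴴ * Vp = 1)
    (hUUp : Uᴴ * Up = 0) (hVVp : Vᴴ * Vp = 0)
    (hS : S = Matrix.diagonal (fun i => (s i : ℂ)))
    (hSp : Sp = Matrix.diagonal (fun i => (sp i : ℂ)))
    (hA : A = U * S * Vᴴ + Up * Sp * Vpᴴ)
    (hdA : dA = dU * S * Vᴴ + U * dS * Vᴴ + U * S * dVᴴ
        + dUp * Sp * Vpᴴ + Up * dSp * Vpᴴ + Up * Sp * dVpᴴ)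
    (hdUU : dUᴴ * U + Uᴴ * dU = 0)
    (hdVV : dVᴴ * V + Vᴴ * dV = 0)
    (ds : Fin t → ℝ)
    (hdS : dS = Matrix.diagonal (fun i => (ds i : ℂ)))
    (hnd : ∀ i j : Fin t, i ≠ j → (s i) ^ 2 ≠ (s j) ^ 2) :
    ∀ i j : Fin t, i ≠ j →
      (Vᴴ * dV) i j
        = (S * (Uᴴ * dA * V) + Vᴴ * dAᴴ * U * S) i j / ((s j : ℂ) ^ 2 - (s i : ℂ) ^ 2) := by
  have hVpV : Vpᴴ * V = 0 := by
    have := congrArg Matrix.conjTranspose hVVp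
    simpa [Matrix.conjTranspose_mul] using this
  have hUUp' : ∀ X : Matrix (Fin (r - t)) (Fin t) ℂ, Uᴴ * (Up * X) = 0 := fun X => by
    rw [← Matrix.mul_assoc, hUUp, Matrix.zero_mul]
  have hU' : ∀ X : Matrix (Fin r) (Fin t) ℂ, Uᴴ * (U * (dS * (Vᴴ * V))) = dS := fun X => by
    rw [hV, Matrix.mul_one, ← Matrix.mul_assoc, hU, Matrix.one_mul]
  have hX : Uᴴ * dA * V = (Uᴴ * dU) * S + dS + S * (dVᴴ * V) := by
    rw [hdA]
    simp only [Matrix.add_mul, Matrix.mul_add, Matrix.mul_assoc, hV, hVpV,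
      Matrix.mul_one, Matrix.mul_zero, add_zero, hUUp']
    rw [← Matrix.mul_assoc Uᴴ U dS, hU, Matrix.one_mul,
      ← Matrix.mul_assoc Uᴴ U (S * (dVᴴ * V)), hU, Matrix.one_mul]
  have hSH : Sᴴ = S := by
    subst hS
    have hst : (star fun i : Fin t => ((s i : ℂ))) = fun i : Fin t => ((s i : ℂ)) :=
      funext fun k => Complex.conj_ofReal (s k)
    rw [Matrix.diagonal_conjTranspose, hst]
  have hdSH : dSᴴ = dS := by
    subst hdS
    have hst : (star fun i : Fin t => ((ds i : ℂ))) = fun i : Fin t => ((ds i : ℂ)) :=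
      funext fun k => Complex.conj_ofReal (ds k)
    rw [Matrix.diagonal_conjTranspose, hst]
  have hXH : Vᴴ * dAᴴ * U = S * (dUᴴ * U) + dS + (Vᴴ * dV) * S := by
    have h1 : Vᴴ * dAᴴ * U = (Uᴴ * dA * V)ᴴ := by
      simp [Matrix.conjTranspose_mul, Matrix.mul_assoc]
    rw [h1, hX]
    simp [Matrix.conjTranspose_mul, Matrix.conjTranspose_add, hSH, hdSH,
      Matrix.mul_assoc]
  have hKd : dUᴴ * U = -(Uᴴ * dU) := eq_neg_of_add_eq_zero_left hdUU
  have hWd : dVᴴ * V = -(Vᴴ * dV) := eq_neg_of_add_eq_zero_left hdVV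
  have hM : S * (Uᴴ * dA * V) + Vᴴ * dAᴴ * U * S
      = (Vᴴ * dV) * (S * S) - (S * S) * (Vᴴ * dV) + (S * dS + dS * S) := by
    rw [hX, hXH, hKd, hWd]
    noncomm_ring
  intro i j hij
  have hne : (s j : ℂ) ^ 2 - (s i : ℂ) ^ 2 ≠ 0 := by
    rw [sub_ne_zero]
    intro h
    exact hnd i j hij (by exact_mod_cast h.symm)
  rw [hM, eq_div_iff hne]
  subst hS hdS
  simp only [Matrix.add_apply, Matrix.sub_apply, Matrix.mul_diagonal,
    Matrix.diagonal_mul, Matrix.diagonal_mul_diagonal,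
    Matrix.diagonal_apply_ne _ hij]
  ring
end

section
/- Under the square truncated SVD setting with the differential relation, if additionally dU†U + U†dU = 0, dV†V + V†dV = 0, dS is diagonal with real entries, and s_k ≠ 0 for every k, then the diagonal entries of the sum U†dU + dV†V are determined by (U† dU + dV† V)_{kk} = (U† dA V − V† (dA)† U)_{kk} / (2 s_k) for every index k. -/
/-!
Write `X = Uᴴ dA V`. The orthogonality relations kill the `⊥`-part of `dA`, leaving
`X = Uᴴ dU S + dS + S dVᴴ V`. Subtracting `Xᴴ = Vᴴ dAᴴ U`, the Hermitian `dS` cancels and the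
skew-Hermitian constraints turn `Sᴴ dUᴴ U` and `Vᴴ dV S` into `S Uᴴ dU` and `dVᴴ V S`, so
`X - Xᴴ = M S + S M` with `M = Uᴴ dU + dVᴴ V`. Since `S` is diagonal, the `k`-th diagonal entry
of the right-hand side is `2 s_k M_kk`.
-/

open Matrix

section Differential

variable {α : Type*} [CommRing α] [StarRing α] {m n p : Type*}
  [Fintype m] [Fintype n] [Fintype p]

theorem conjTranspose_mul_differential_mul [DecidableEq n] (U V dU dV : Matrix m n α)
    (Up Vp dUp dVp : Matrix m p α) (S dS : Matrix n n α) (Sp dSp : Matrix p p α)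
    (hU : Uᴴ * U = 1) (hV : Vᴴ * V = 1) (hUUp : Uᴴ * Up = 0) (hVVp : Vᴴ * Vp = 0) :
    Uᴴ * (dU * S * Vᴴ + U * dS * Vᴴ + U * S * dVᴴ
        + dUp * Sp * Vpᴴ + Up * dSp * Vpᴴ + Up * Sp * dVpᴴ) * V
      = Uᴴ * dU * S + dS + S * dVᴴ * V := by
  have hVpV : Vpᴴ * V = 0 := by simpa using congrArg conjTranspose hVVp
  simp only [Matrix.mul_add, Matrix.add_mul, Matrix.mul_assoc, hV, hVpV,
    Matrix.mul_one, Matrix.mul_zero]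
  simp only [← Matrix.mul_assoc Uᴴ, hU, hUUp, Matrix.one_mul, Matrix.zero_mul, add_zero]

theorem sub_conjTranspose_eq_of_skewHermitian {U V dU dV : Matrix m n α} {S dS : Matrix n n α}
    (hS : S.IsHermitian) (hdS : dS.IsHermitian)
    (hdUU : dUᴴ * U + Uᴴ * dU = 0) (hdVV : dVᴴ * V + Vᴴ * dV = 0) :
    (Uᴴ * dU * S + dS + S * dVᴴ * V) - (Uᴴ * dU * S + dS + S * dVᴴ * V)ᴴ
      = (Uᴴ * dU + dVᴴ * V) * S + S * (Uᴴ * dU + dVᴴ * V) := by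
  have hdUU' : dUᴴ * U = -(Uᴴ * dU) := eq_neg_of_add_eq_zero_left hdUU
  have hdVV' : Vᴴ * dV = -(dVᴴ * V) := eq_neg_of_add_eq_zero_right hdVV
  simp only [conjTranspose_add, conjTranspose_mul, conjTranspose_conjTranspose, hS.eq, hdS.eq,
    Matrix.mul_assoc, hdUU', hdVV']
  simp only [Matrix.add_mul, Matrix.mul_add, Matrix.mul_assoc, Matrix.mul_neg, Matrix.neg_mul]
  abel

end Differential

theorem mul_diagonal_add_diagonal_mul_apply_self {α n : Type*} [CommSemiring α] [DecidableEq n]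
    [Fintype n] (M : Matrix n n α) (d : n → α) (k : n) :
    (M * diagonal d + diagonal d * M) k k = 2 * d k * M k k := by
  simp only [Matrix.add_apply, Matrix.mul_diagonal, Matrix.diagonal_mul]
  ring

theorem stmt_6_general
    {r t : ℕ}
    (U V : Matrix (Fin r) (Fin t) ℂ)
    (Up Vp : Matrix (Fin r) (Fin (r - t)) ℂ)
    (s : Fin t → ℝ)
    (S : Matrix (Fin t) (Fin t) ℂ)
    (Sp : Matrix (Fin (r - t)) (Fin (r - t)) ℂ)
    (dA : Matrix (Fin r) (Fin r) ℂ)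
    (dU dV : Matrix (Fin r) (Fin t) ℂ)
    (dS : Matrix (Fin t) (Fin t) ℂ)
    (dUp dVp : Matrix (Fin r) (Fin (r - t)) ℂ)
    (dSp : Matrix (Fin (r - t)) (Fin (r - t)) ℂ)
    (hU : Uᴴ * U = 1) (hV : Vᴴ * V = 1)
    (hUUp : Uᴴ * Up = 0) (hVVp : Vᴴ * Vp = 0)
    (hS : S = Matrix.diagonal (fun i => (s i : ℂ)))
    (hdA : dA = dU * S * Vᴴ + U * dS * Vᴴ + U * S * dVᴴ
        + dUp * Sp * Vpᴴ + Up * dSp * Vpᴴ + Up * Sp * dVpᴴ)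
    (hdUU : dUᴴ * U + Uᴴ * dU = 0)
    (hdVV : dVᴴ * V + Vᴴ * dV = 0)
    (ds : Fin t → ℝ)
    (hdS : dS = Matrix.diagonal (fun i => (ds i : ℂ)))
    (hs : ∀ k, s k ≠ 0) :
    ∀ k : Fin t,
      (Uᴴ * dU + dVᴴ * V) k k
        = (Uᴴ * dA * V - Vᴴ * dAᴴ * U) k k / (2 * (s k : ℂ)) := by
  intro k
  have hSherm : S.IsHermitian := hS ▸ isHermitian_diagonal_of_self_adjoint _ (by ext; simp)
  have hdSherm : dS.IsHermitian := hdS ▸ isHermitian_diagonal_of_self_adjoint _ (by ext; simp)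
  have hX : Uᴴ * dA * V = Uᴴ * dU * S + dS + S * dVᴴ * V := by
    rw [hdA]
    exact conjTranspose_mul_differential_mul U V dU dV Up Vp dUp dVp S dS Sp dSp hU hV hUUp hVVp
  have hXH : Vᴴ * dAᴴ * U = (Uᴴ * dA * V)ᴴ := by
    simp only [conjTranspose_mul, conjTranspose_conjTranspose, Matrix.mul_assoc]
  rw [hXH, hX, sub_conjTranspose_eq_of_skewHermitian hSherm hdSherm hdUU hdVV, hS,
    mul_diagonal_add_diagonal_mul_apply_self]
  have hsk : (s k : ℂ) ≠ 0 := by exact_mod_cast hs k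
  field_simp

theorem stmt_6
    {r t : ℕ} (hr : 0 < r) (ht : 0 < t) (htr : t < r)
    (U V : Matrix (Fin r) (Fin t) ℂ)
    (Up Vp : Matrix (Fin r) (Fin (r - t)) ℂ)
    (s : Fin t → ℝ) (sp : Fin (r - t) → ℝ)
    (S : Matrix (Fin t) (Fin t) ℂ)
    (Sp : Matrix (Fin (r - t)) (Fin (r - t)) ℂ)
    (A dA : Matrix (Fin r) (Fin r) ℂ)
    (dU dV : Matrix (Fin r) (Fin t) ℂ)
    (dS : Matrix (Fin t) (Fin t) ℂ)
    (dUp dVp : Matrix (Fin r) (Fin (r - t)) ℂ)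
    (dSp : Matrix (Fin (r - t)) (Fin (r - t)) ℂ)
    (hU : Uᴴ * U = 1) (hV : Vᴴ * V = 1)
    (hUp : Upᴴ * Up = 1) (hVp : Vpᴴ * Vp = 1)
    (hUUp : Uᴴ * Up = 0) (hVVp : Vᴴ * Vp = 0)
    (hS : S = Matrix.diagonal (fun i => (s i : ℂ)))
    (hSp : Sp = Matrix.diagonal (fun i => (sp i : ℂ)))
    (hA : A = U * S * Vᴴ + Up * Sp * Vpᴴ)
    (hdA : dA = dU * S * Vᴴ + U * dS * Vᴴ + U * S * dVᴴ
        + dUp * Sp * Vpᴴ + Up * dSp * Vpᴴ + Up * Sp * dVpᴴ)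
    (hdUU : dUᴴ * U + Uᴴ * dU = 0)
    (hdVV : dVᴴ * V + Vᴴ * dV = 0)
    (ds : Fin t → ℝ)
    (hdS : dS = Matrix.diagonal (fun i => (ds i : ℂ)))
    (hs : ∀ k, s k ≠ 0) :
    ∀ k : Fin t,
      (Uᴴ * dU + dVᴴ * V) k k
        = (Uᴴ * dA * V - Vᴴ * dAᴴ * U) k k / (2 * (s k : ℂ)) :=
  stmt_6_general U V Up Vp s S Sp dA dU dV dS dUp dVp dSp hU hV hUUp hVVp hS hdA hdUU hdVV ds hdS hs
end

section
/- Under the square truncated SVD setting with the differential relation, if additionally dU†U⊥ + U†dU⊥ = 0 and dV⊥†V + V⊥†dV = 0, and the kept and discarded squared singular values are disjoint (s_j² ≠ (s⊥_i)² for all i, j), then every entry of U⊥†dU is determined by (U⊥† dU)_{ij} = (U⊥† dA V S + S⊥ V⊥† (dA)† U)_{ij} / (s_j² − (s⊥_i)²). -/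
open Matrix

theorem stmt_7
    {r t : ℕ} (hr : 0 < r) (ht : 0 < t) (htr : t < r)
    (U V : Matrix (Fin r) (Fin t) ℂ)
    (Up Vp : Matrix (Fin r) (Fin (r - t)) ℂ)
    (s : Fin t → ℝ) (sp : Fin (r - t) → ℝ)
    (S : Matrix (Fin t) (Fin t) ℂ)
    (Sp : Matrix (Fin (r - t)) (Fin (r - t)) ℂ)
    (A dA : Matrix (Fin r) (Fin r) ℂ)
    (dU dV : Matrix (Fin r) (Fin t) ℂ)
    (dS : Matrix (Fin t) (Fin t) ℂ)
    (dUp dVp : Matrix (Fin r) (Fin (r - t)) ℂ)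
    (dSp : Matrix (Fin (r - t)) (Fin (r - t)) ℂ)
    (hU : Uᴴ * U = 1) (hV : Vᴴ * V = 1)
    (hUp : Upᴴ * Up = 1) (hVp : Vpᴴ * Vp = 1)
    (hUUp : Uᴴ * Up = 0) (hVVp : Vᴴ * Vp = 0)
    (hS : S = Matrix.diagonal (fun i => (s i : ℂ)))
    (hSp : Sp = Matrix.diagonal (fun i => (sp i : ℂ)))
    (hA : A = U * S * Vᴴ + Up * Sp * Vpᴴ)
    (hdA : dA = dU * S * Vᴴ + U * dS * Vᴴ + U * S * dVᴴ
        + dUp * Sp * Vpᴴ + Up * dSp * Vpᴴ + Up * Sp * dVpᴴ)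
    (hdUUp : dUᴴ * Up + Uᴴ * dUp = 0)
    (hdVpV : dVpᴴ * V + Vpᴴ * dV = 0)
    (hnd : ∀ (i : Fin (r - t)) (j : Fin t), (s j) ^ 2 ≠ (sp i) ^ 2) :
    ∀ (i : Fin (r - t)) (j : Fin t),
      (Upᴴ * dU) i j
        = (Upᴴ * dA * V * S + Sp * (Vpᴴ * dAᴴ * U)) i j
            / ((s j : ℂ) ^ 2 - (sp i : ℂ) ^ 2) := by
  intro i j
  have hSH : Sᴴ = S := by
    subst hS; simp [diagonal_conjTranspose, Function.comp]
  have hSpH : Spᴴ = Sp := by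
    subst hSp; simp [diagonal_conjTranspose, Function.comp]
  have hVpV : Vpᴴ * V = 0 := by
    have := congrArg conjTranspose hVVp
    simpa [conjTranspose_mul] using this
  have hUpU : Upᴴ * U = 0 := by
    have := congrArg conjTranspose hUUp
    simpa [conjTranspose_mul] using this
  -- assoc-friendly helpers
  have hV1 : ∀ (X : Matrix (Fin t) (Fin t) ℂ), Vᴴ * (V * X) = X := by
    intro X; rw [← Matrix.mul_assoc, hV, Matrix.one_mul]
  have hU1 : ∀ (X : Matrix (Fin t) (Fin t) ℂ), Uᴴ * (U * X) = X := by
    intro X; rw [← Matrix.mul_assoc, hU, Matrix.one_mul]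
  have hVp1 : ∀ (X : Matrix (Fin (r-t)) (Fin t) ℂ), Vpᴴ * (Vp * X) = X := by
    intro X; rw [← Matrix.mul_assoc, hVp, Matrix.one_mul]
  have hUp1 : ∀ (X : Matrix (Fin (r-t)) (Fin t) ℂ), Upᴴ * (Up * X) = X := by
    intro X; rw [← Matrix.mul_assoc, hUp, Matrix.one_mul]
  have hUUp0 : ∀ (X : Matrix (Fin (r-t)) (Fin t) ℂ), Uᴴ * (Up * X) = 0 := by
    intro X; rw [← Matrix.mul_assoc, hUUp, Matrix.zero_mul]
  have hVVp0 : ∀ (X : Matrix (Fin (r-t)) (Fin t) ℂ), Vᴴ * (Vp * X) = 0 := by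
    intro X; rw [← Matrix.mul_assoc, hVVp, Matrix.zero_mul]
  have hVpV0 : ∀ (X : Matrix (Fin t) (Fin t) ℂ), Vpᴴ * (V * X) = 0 := by
    intro X; rw [← Matrix.mul_assoc, hVpV, Matrix.zero_mul]
  have hUpU0 : ∀ (X : Matrix (Fin t) (Fin t) ℂ), Upᴴ * (U * X) = 0 := by
    intro X; rw [← Matrix.mul_assoc, hUpU, Matrix.zero_mul]
  have hdVpVn : dVpᴴ * V = -(Vpᴴ * dV) := by
    rw [add_eq_zero_iff_eq_neg] at hdVpV; exact hdVpV
  have hdVpVn' : ∀ (X : Matrix (Fin t) (Fin t) ℂ),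
      dVpᴴ * (V * X) = -(Vpᴴ * (dV * X)) := by
    intro X
    rw [← Matrix.mul_assoc, hdVpVn, Matrix.neg_mul, Matrix.mul_assoc]
  have hdUpUn : dUpᴴ * U = -(Upᴴ * dU) := by
    have h := congrArg conjTranspose hdUUp
    simp only [conjTranspose_add, conjTranspose_mul, conjTranspose_conjTranspose,
      conjTranspose_zero] at h
    rw [add_comm, add_eq_zero_iff_eq_neg] at h
    exact h
  have key : Upᴴ * dU * (S * S) - Sp * Sp * (Upᴴ * dU)
      = Upᴴ * dA * V * S + Sp * (Vpᴴ * dAᴴ * U) := by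
    subst hdA
    simp only [conjTranspose_add, conjTranspose_mul, conjTranspose_conjTranspose,
      hSH, hSpH, Matrix.add_mul, Matrix.mul_add, Matrix.mul_assoc,
      hV1, hU1, hVp1, hUp1, hUUp0, hVVp0, hVpV0, hUpU0, hdVpVn', hdUpUn,
      hU, hV, hUp, hVp, hUpU, hVpV, hUUp, hVVp,
      Matrix.mul_zero, Matrix.zero_mul, Matrix.mul_neg, Matrix.neg_mul,
      Matrix.mul_one, Matrix.one_mul, add_zero, zero_add]
    abel
  have hden : (s j : ℂ) ^ 2 - (sp i : ℂ) ^ 2 ≠ 0 := by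
    intro h
    exact hnd i j (by exact_mod_cast sub_eq_zero.mp h)
  have hkey := congrFun (congrFun key i) j
  have h1 : (Upᴴ * dU * (S * S)) i j = (Upᴴ * dU) i j * (s j : ℂ) ^ 2 := by
    subst hS
    simp [Matrix.diagonal_mul_diagonal, Matrix.mul_diagonal, sq]
  have h2 : (Sp * Sp * (Upᴴ * dU)) i j = (sp i : ℂ) ^ 2 * (Upᴴ * dU) i j := by
    subst hSp
    simp [Matrix.diagonal_mul_diagonal, Matrix.diagonal_mul, sq]
  have hsub : (Upᴴ * dU * (S * S) - Sp * Sp * (Upᴴ * dU)) i j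
      = (Upᴴ * dU) i j * ((s j : ℂ) ^ 2 - (sp i : ℂ) ^ 2) := by
    simp only [Matrix.sub_apply, h1, h2]; ring
  rw [hsub] at hkey
  rw [eq_div_iff hden]
  exact hkey
end

section
/- Under the square truncated SVD setting with the differential relation, if additionally dU†U⊥ + U†dU⊥ = 0 and dV⊥†V + V⊥†dV = 0, and the kept and discarded squared singular values are disjoint (s_j² ≠ (s⊥_i)² for all i, j), then every entry of V⊥†dV is determined by (V⊥† dV)_{ij} = (S⊥ U⊥† dA V + V⊥† (dA)† U S)_{ij} / (s_j² − (s⊥_i)²). -/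
open Matrix

theorem stmt_8
    {r t : ℕ} (hr : 0 < r) (ht : 0 < t) (htr : t < r)
    (U V : Matrix (Fin r) (Fin t) ℂ)
    (Up Vp : Matrix (Fin r) (Fin (r - t)) ℂ)
    (s : Fin t → ℝ) (sp : Fin (r - t) → ℝ)
    (S : Matrix (Fin t) (Fin t) ℂ)
    (Sp : Matrix (Fin (r - t)) (Fin (r - t)) ℂ)
    (A dA : Matrix (Fin r) (Fin r) ℂ)
    (dU dV : Matrix (Fin r) (Fin t) ℂ)
    (dS : Matrix (Fin t) (Fin t) ℂ)
    (dUp dVp : Matrix (Fin r) (Fin (r - t)) ℂ)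
    (dSp : Matrix (Fin (r - t)) (Fin (r - t)) ℂ)
    (hU : Uᴴ * U = 1) (hV : Vᴴ * V = 1)
    (hUp : Upᴴ * Up = 1) (hVp : Vpᴴ * Vp = 1)
    (hUUp : Uᴴ * Up = 0) (hVVp : Vᴴ * Vp = 0)
    (hS : S = Matrix.diagonal (fun i => (s i : ℂ)))
    (hSp : Sp = Matrix.diagonal (fun i => (sp i : ℂ)))
    (hA : A = U * S * Vᴴ + Up * Sp * Vpᴴ)
    (hdA : dA = dU * S * Vᴴ + U * dS * Vᴴ + U * S * dVᴴ
        + dUp * Sp * Vpᴴ + Up * dSp * Vpᴴ + Up * Sp * dVpᴴ)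
    (hdUUp : dUᴴ * Up + Uᴴ * dUp = 0)
    (hdVpV : dVpᴴ * V + Vpᴴ * dV = 0)
    (hnd : ∀ (i : Fin (r - t)) (j : Fin t), (s j) ^ 2 ≠ (sp i) ^ 2) :
    ∀ (i : Fin (r - t)) (j : Fin t),
      (Vpᴴ * dV) i j
        = (Sp * (Upᴴ * dA * V) + Vpᴴ * dAᴴ * U * S) i j
            / ((s j : ℂ) ^ 2 - (sp i : ℂ) ^ 2) := by
  have hUpU : Upᴴ * U = 0 := by
    have := congrArg conjTranspose hUUp
    simpa [conjTranspose_mul] using this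
  have hVpV : Vpᴴ * V = 0 := by
    have := congrArg conjTranspose hVVp
    simpa [conjTranspose_mul] using this
  have hdUUp' : Upᴴ * dU + dUpᴴ * U = 0 := by
    have := congrArg conjTranspose hdUUp
    simpa [conjTranspose_mul, add_comm] using this
  have hSH : Sᴴ = S := by
    rw [hS]
    ext i j
    rcases eq_or_ne i j with h | h
    · simp [Matrix.conjTranspose_apply, Matrix.diagonal_apply, h]
    · simp [Matrix.conjTranspose_apply, Matrix.diagonal_apply, h, h.symm]
  have hSpH : Spᴴ = Sp := by
    rw [hSp]
    ext i j
    rcases eq_or_ne i j with h | h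
    · simp [Matrix.conjTranspose_apply, Matrix.diagonal_apply, h]
    · simp [Matrix.conjTranspose_apply, Matrix.diagonal_apply, h, h.symm]
  have e1 : Upᴴ * dA * V = Upᴴ * dU * S + Sp * (dVpᴴ * V) := by
    rw [hdA]
    simp only [Matrix.add_mul, Matrix.mul_add]
    rw [show Upᴴ * (dU * S * Vᴴ) * V = Upᴴ * dU * S * (Vᴴ * V) by
      simp only [Matrix.mul_assoc]]
    rw [show Upᴴ * (U * dS * Vᴴ) * V = Upᴴ * U * (dS * (Vᴴ * V)) by
      simp only [Matrix.mul_assoc]]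
    rw [show Upᴴ * (U * S * dVᴴ) * V = Upᴴ * U * (S * (dVᴴ * V)) by
      simp only [Matrix.mul_assoc]]
    rw [show Upᴴ * (dUp * Sp * Vpᴴ) * V = Upᴴ * dUp * (Sp * (Vpᴴ * V)) by
      simp only [Matrix.mul_assoc]]
    rw [show Upᴴ * (Up * dSp * Vpᴴ) * V = Upᴴ * Up * (dSp * (Vpᴴ * V)) by
      simp only [Matrix.mul_assoc]]
    rw [show Upᴴ * (Up * Sp * dVpᴴ) * V = Upᴴ * Up * (Sp * (dVpᴴ * V)) by
      simp only [Matrix.mul_assoc]]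
    rw [hV, hUpU, hVpV, hUp]
    simp
  have e2 : Vpᴴ * dAᴴ * U = Vpᴴ * dV * S + Sp * (dUpᴴ * U) := by
    rw [hdA]
    simp only [conjTranspose_add, conjTranspose_mul, conjTranspose_conjTranspose,
      hSH, hSpH, Matrix.add_mul, Matrix.mul_add]
    rw [show Vpᴴ * (V * (S * dUᴴ)) * U = Vpᴴ * V * (S * (dUᴴ * U)) by
      simp only [Matrix.mul_assoc]]
    rw [show Vpᴴ * (V * (dSᴴ * Uᴴ)) * U = Vpᴴ * V * (dSᴴ * (Uᴴ * U)) by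
      simp only [Matrix.mul_assoc]]
    rw [show Vpᴴ * (dV * (S * Uᴴ)) * U = Vpᴴ * dV * S * (Uᴴ * U) by
      simp only [Matrix.mul_assoc]]
    rw [show Vpᴴ * (Vp * (Sp * dUpᴴ)) * U = Vpᴴ * Vp * (Sp * (dUpᴴ * U)) by
      simp only [Matrix.mul_assoc]]
    rw [show Vpᴴ * (Vp * (dSpᴴ * Upᴴ)) * U = Vpᴴ * Vp * (dSpᴴ * (Upᴴ * U)) by
      simp only [Matrix.mul_assoc]]
    rw [show Vpᴴ * (dVp * (Sp * Upᴴ)) * U = Vpᴴ * dVp * (Sp * (Upᴴ * U)) by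
      simp only [Matrix.mul_assoc]]
    rw [hVpV, hU, hVp, hUpU]
    simp
  have hdVpV' : dVpᴴ * V = -(Vpᴴ * dV) := eq_neg_of_add_eq_zero_left hdVpV
  have hdUpU' : dUpᴴ * U = -(Upᴴ * dU) := eq_neg_of_add_eq_zero_right hdUUp'
  have key : Sp * (Upᴴ * dA * V) + Vpᴴ * dAᴴ * U * S
      = Vpᴴ * dV * (S * S) - Sp * (Sp * (Vpᴴ * dV)) := by
    rw [e1, e2, hdVpV', hdUpU']
    simp only [Matrix.mul_add, Matrix.add_mul, Matrix.mul_neg, Matrix.neg_mul,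
      Matrix.mul_assoc]
    abel
  intro i j
  have hkey := congrFun (congrFun key i) j
  have hne : ((s j : ℂ) ^ 2 - (sp i : ℂ) ^ 2) ≠ 0 := by
    intro h
    apply hnd i j
    have : ((s j : ℂ)) ^ 2 = ((sp i : ℂ)) ^ 2 := by linear_combination h
    exact_mod_cast this
  rw [show (Sp * (Upᴴ * dA * V) + Vpᴴ * dAᴴ * U * S) i j
      = (Vpᴴ * dV * (S * S) - Sp * (Sp * (Vpᴴ * dV))) i j from by rw [key]]
  rw [Matrix.sub_apply, hS, hSp]
  rw [show Vpᴴ * dV * (Matrix.diagonal (fun i => (s i : ℂ)) * Matrix.diagonal (fun i => (s i : ℂ)))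
      = Vpᴴ * dV * Matrix.diagonal (fun i => (s i : ℂ) * (s i : ℂ)) from by
    rw [Matrix.diagonal_mul_diagonal]]
  rw [Matrix.mul_diagonal, Matrix.diagonal_mul, Matrix.diagonal_mul]
  field_simp
end

section
/- Under the non-square truncated SVD setting with the differential relation, the projector P = 1_n − U U† − U⊥ U⊥† onto the orthogonal complement of the computed left singular vectors satisfies P · dU · S = P · dA · V; in particular, if s_k ≠ 0 for every k, then P · dU = P · dA · V · S⁻¹. -/
open Matrix

theorem stmt_9
    {n m t k : ℕ} (hn : 0 < n) (hm : 0 < m) (ht : 0 < t) (hk : 0 < k)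
    (U : Matrix (Fin n) (Fin t) ℂ) (V : Matrix (Fin m) (Fin t) ℂ)
    (Up : Matrix (Fin n) (Fin k) ℂ) (Vp : Matrix (Fin m) (Fin k) ℂ)
    (s : Fin t → ℝ) (sp : Fin k → ℝ)
    (S : Matrix (Fin t) (Fin t) ℂ) (Sp : Matrix (Fin k) (Fin k) ℂ)
    (A dA : Matrix (Fin n) (Fin m) ℂ)
    (dU : Matrix (Fin n) (Fin t) ℂ) (dV : Matrix (Fin m) (Fin t) ℂ)
    (dS : Matrix (Fin t) (Fin t) ℂ)
    (dUp : Matrix (Fin n) (Fin k) ℂ) (dVp : Matrix (Fin m) (Fin k) ℂ)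
    (dSp : Matrix (Fin k) (Fin k) ℂ)
    (hU : Uᴴ * U = 1) (hV : Vᴴ * V = 1)
    (hUpUp : Upᴴ * Up = 1)
    (hUUp : Uᴴ * Up = 0) (hVVp : Vᴴ * Vp = 0)
    (hS : S = Matrix.diagonal (fun i => (s i : ℂ)))
    (hSp : Sp = Matrix.diagonal (fun i => (sp i : ℂ)))
    (hA : A = U * S * Vᴴ + Up * Sp * Vpᴴ)
    (hdA : dA = dU * S * Vᴴ + U * dS * Vᴴ + U * S * dVᴴ
        + dUp * Sp * Vpᴴ + Up * dSp * Vpᴴ + Up * Sp * dVpᴴ) :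
    (1 - U * Uᴴ - Up * Upᴴ) * dU * S = (1 - U * Uᴴ - Up * Upᴴ) * dA * V ∧
      ((∀ i, s i ≠ 0) →
        (1 - U * Uᴴ - Up * Upᴴ) * dU = (1 - U * Uᴴ - Up * Upᴴ) * dA * V * S⁻¹) := by
  have hVpV : Vpᴴ * V = 0 := by
    have h := congrArg Matrix.conjTranspose hVVp
    simpa [Matrix.conjTranspose_mul] using h
  have hUpU : Upᴴ * U = 0 := by
    have h := congrArg Matrix.conjTranspose hUUp
    simpa [Matrix.conjTranspose_mul] using h
  have hPU : (1 - U * Uᴴ - Up * Upᴴ) * U = 0 := by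
    simp [Matrix.sub_mul, Matrix.mul_assoc, hU, hUpU]
  have hPUp : (1 - U * Uᴴ - Up * Upᴴ) * Up = 0 := by
    simp [Matrix.sub_mul, Matrix.mul_assoc, hUpUp, hUUp]
  have hdAV : dA * V = dU * S + U * dS + U * (S * (dVᴴ * V)) + Up * (Sp * (dVpᴴ * V)) := by
    subst hdA
    simp [Matrix.add_mul, Matrix.mul_assoc, hV, hVpV]
  have key : (1 - U * Uᴴ - Up * Upᴴ) * dU * S = (1 - U * Uᴴ - Up * Upᴴ) * dA * V := by
    rw [Matrix.mul_assoc, Matrix.mul_assoc, hdAV, Matrix.mul_add, Matrix.mul_add, Matrix.mul_add,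
      ← Matrix.mul_assoc (1 - U * Uᴴ - Up * Upᴴ) U, ← Matrix.mul_assoc (1 - U * Uᴴ - Up * Upᴴ) U,
      ← Matrix.mul_assoc (1 - U * Uᴴ - Up * Upᴴ) Up, hPU, hPUp]
    simp [Matrix.mul_assoc]
  refine ⟨key, fun hs => ?_⟩
  have hdet : IsUnit S.det := by
    rw [hS, Matrix.det_diagonal]
    simp only [isUnit_iff_ne_zero]
    exact Finset.prod_ne_zero_iff.2 fun i _ => by exact_mod_cast hs i
  have hSS : S * S⁻¹ = 1 := Matrix.mul_nonsing_inv S hdet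
  rw [← key, Matrix.mul_assoc ((1 - U * Uᴴ - Up * Upᴴ) * dU) S, hSS, Matrix.mul_one]
end

section
/- Under the non-square truncated SVD setting with the differential relation, the projector Q = 1_m − V V† − V⊥ V⊥† onto the orthogonal complement of the computed right singular vectors satisfies Q · dV · S = Q · (dA)† · U; in particular, if s_k ≠ 0 for every k, then Q · dV = Q · (dA)† · U · S⁻¹. -/
open Matrix

theorem stmt_10
    {n m t k : ℕ} (hn : 0 < n) (hm : 0 < m) (ht : 0 < t) (hk : 0 < k)
    (U : Matrix (Fin n) (Fin t) ℂ) (V : Matrix (Fin m) (Fin t) ℂ)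
    (Up : Matrix (Fin n) (Fin k) ℂ) (Vp : Matrix (Fin m) (Fin k) ℂ)
    (s : Fin t → ℝ) (sp : Fin k → ℝ)
    (S : Matrix (Fin t) (Fin t) ℂ) (Sp : Matrix (Fin k) (Fin k) ℂ)
    (A dA : Matrix (Fin n) (Fin m) ℂ)
    (dU : Matrix (Fin n) (Fin t) ℂ) (dV : Matrix (Fin m) (Fin t) ℂ)
    (dS : Matrix (Fin t) (Fin t) ℂ)
    (dUp : Matrix (Fin n) (Fin k) ℂ) (dVp : Matrix (Fin m) (Fin k) ℂ)
    (dSp : Matrix (Fin k) (Fin k) ℂ)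
    (hU : Uᴴ * U = 1) (hV : Vᴴ * V = 1)
    (hVpVp : Vpᴴ * Vp = 1)
    (hUUp : Uᴴ * Up = 0) (hVVp : Vᴴ * Vp = 0)
    (hS : S = Matrix.diagonal (fun i => (s i : ℂ)))
    (hSp : Sp = Matrix.diagonal (fun i => (sp i : ℂ)))
    (hA : A = U * S * Vᴴ + Up * Sp * Vpᴴ)
    (hdA : dA = dU * S * Vᴴ + U * dS * Vᴴ + U * S * dVᴴ
        + dUp * Sp * Vpᴴ + Up * dSp * Vpᴴ + Up * Sp * dVpᴴ) :
    (1 - V * Vᴴ - Vp * Vpᴴ) * dV * S = (1 - V * Vᴴ - Vp * Vpᴴ) * dAᴴ * U ∧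
      ((∀ i, s i ≠ 0) →
        (1 - V * Vᴴ - Vp * Vpᴴ) * dV = (1 - V * Vᴴ - Vp * Vpᴴ) * dAᴴ * U * S⁻¹) := by
  have hSH : Sᴴ = S := by
    subst hS
    ext i j
    by_cases h : i = j
    · simp [h, Matrix.conjTranspose_apply, Complex.conj_ofReal]
    · simp [Matrix.conjTranspose_apply, Matrix.diagonal_apply_ne _ h,
        Matrix.diagonal_apply_ne _ (Ne.symm h)]
  have hVpV : Vpᴴ * V = 0 := by
    have := congrArg Matrix.conjTranspose hVVp
    simpa [Matrix.conjTranspose_mul] using this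
  have hUpU : Upᴴ * U = 0 := by
    have := congrArg Matrix.conjTranspose hUUp
    simpa [Matrix.conjTranspose_mul] using this
  set Q := (1 : Matrix (Fin m) (Fin m) ℂ) - V * Vᴴ - Vp * Vpᴴ with hQ
  have hQVeq : Q * V = 0 := by
    rw [hQ, Matrix.sub_mul, Matrix.sub_mul, Matrix.one_mul, Matrix.mul_assoc, Matrix.mul_assoc,
      hV, hVpV, Matrix.mul_one, Matrix.mul_zero, sub_zero, sub_self]
  have hQVpeq : Q * Vp = 0 := by
    rw [hQ, Matrix.sub_mul, Matrix.sub_mul, Matrix.one_mul, Matrix.mul_assoc, Matrix.mul_assoc,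
      hVpVp, hVVp, Matrix.mul_one, Matrix.mul_zero, sub_zero, sub_self]
  have hQV : ∀ (p : ℕ) (X : Matrix (Fin t) (Fin p) ℂ), Q * (V * X) = 0 := by
    intro p X
    rw [← Matrix.mul_assoc, hQVeq, Matrix.zero_mul]
  have hQVp : ∀ (p : ℕ) (X : Matrix (Fin k) (Fin p) ℂ), Q * (Vp * X) = 0 := by
    intro p X
    rw [← Matrix.mul_assoc, hQVpeq, Matrix.zero_mul]
  have key : Q * dV * S = Q * dAᴴ * U := by
    rw [hdA]
    simp only [Matrix.conjTranspose_add, Matrix.conjTranspose_mul,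
      Matrix.conjTranspose_conjTranspose, Matrix.add_mul, Matrix.mul_add, Matrix.mul_assoc,
      hUpU, hU, Matrix.mul_zero, Matrix.mul_one, hQV, hQVp, hSH, add_zero, zero_add]
  refine ⟨key, fun hs => ?_⟩
  have hSinv : S * S⁻¹ = 1 := by
    subst hS
    rw [Matrix.mul_nonsing_inv]
    simp [Matrix.det_diagonal, Finset.prod_eq_zero_iff, hs]
  calc Q * dV = Q * dV * (S * S⁻¹) := by rw [hSinv, Matrix.mul_one]
    _ = Q * dAᴴ * U * S⁻¹ := by rw [← Matrix.mul_assoc, key, Matrix.mul_assoc]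
end

section
/- Under the truncated SVD setting for iterative solvers with the differential relation and the orthogonality-preserving conditions dU⊥†U + U⊥†dU = 0 and dV⊥†V + V⊥†dV = 0, the projected differentials Ũ₂ = (1_n − U U†) dU and Ṽ₂ = (1_m − V V†) dV satisfy the coupled equations (1_m − V V†)(dA)† U = Ṽ₂ S − A† Ũ₂ and (1_n − U U†) dA V = Ũ₂ S − A Ṽ₂. -/
open Matrix

theorem stmt_12
    {n m t k : ℕ} (hn : 0 < n) (hm : 0 < m) (ht : 0 < t) (hk : 0 < k)
    (U : Matrix (Fin n) (Fin t) ℂ) (V : Matrix (Fin m) (Fin t) ℂ)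
    (Up : Matrix (Fin n) (Fin k) ℂ) (Vp : Matrix (Fin m) (Fin k) ℂ)
    (s : Fin t → ℝ) (sp : Fin k → ℝ)
    (S : Matrix (Fin t) (Fin t) ℂ) (Sp : Matrix (Fin k) (Fin k) ℂ)
    (A dA : Matrix (Fin n) (Fin m) ℂ)
    (dU : Matrix (Fin n) (Fin t) ℂ) (dV : Matrix (Fin m) (Fin t) ℂ)
    (dS : Matrix (Fin t) (Fin t) ℂ)
    (dUp : Matrix (Fin n) (Fin k) ℂ) (dVp : Matrix (Fin m) (Fin k) ℂ)
    (dSp : Matrix (Fin k) (Fin k) ℂ)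
    (hU : Uᴴ * U = 1) (hV : Vᴴ * V = 1)
    (hUUp : Uᴴ * Up = 0) (hVVp : Vᴴ * Vp = 0)
    (hS : S = Matrix.diagonal (fun i => (s i : ℂ)))
    (hSp : Sp = Matrix.diagonal (fun i => (sp i : ℂ)))
    (hA : A = U * S * Vᴴ + Up * Sp * Vpᴴ)
    (hdA : dA = dU * S * Vᴴ + U * dS * Vᴴ + U * S * dVᴴ
        + dUp * Sp * Vpᴴ + Up * dSp * Vpᴴ + Up * Sp * dVpᴴ)
    (hdUpU : dUpᴴ * U + Upᴴ * dU = 0)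
    (hdVpV : dVpᴴ * V + Vpᴴ * dV = 0) :
    (1 - V * Vᴴ) * dAᴴ * U
        = ((1 - V * Vᴴ) * dV) * S - Aᴴ * ((1 - U * Uᴴ) * dU) ∧
      (1 - U * Uᴴ) * dA * V
        = ((1 - U * Uᴴ) * dU) * S - A * ((1 - V * Vᴴ) * dV) := by
  have hSH : Sᴴ = S := by
    subst hS
    ext i j
    by_cases h : i = j
    · subst h; simp [Matrix.conjTranspose_apply, Complex.conj_ofReal]
    · rw [Matrix.conjTranspose_apply, Matrix.diagonal_apply_ne _ (Ne.symm h),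
        Matrix.diagonal_apply_ne _ h, star_zero]
  have hSpH : Spᴴ = Sp := by
    subst hSp
    ext i j
    by_cases h : i = j
    · subst h; simp [Matrix.conjTranspose_apply, Complex.conj_ofReal]
    · rw [Matrix.conjTranspose_apply, Matrix.diagonal_apply_ne _ (Ne.symm h),
        Matrix.diagonal_apply_ne _ h, star_zero]
  have hUpU : Upᴴ * U = 0 := by
    have := congrArg Matrix.conjTranspose hUUp
    simpa using this
  have hVpV : Vpᴴ * V = 0 := by
    have := congrArg Matrix.conjTranspose hVVp
    simpa using this
  have hdUpU' : dUpᴴ * U = -(Upᴴ * dU) := by linear_combination (norm := noncomm_ring) hdUpU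
  have hdVpV' : dVpᴴ * V = -(Vpᴴ * dV) := by linear_combination (norm := noncomm_ring) hdVpV
  have e1 : ∀ {p : ℕ} (X : Matrix (Fin t) (Fin p) ℂ), Uᴴ * (U * X) = X := fun X => by
    rw [← Matrix.mul_assoc, hU, Matrix.one_mul]
  have e2 : ∀ {p : ℕ} (X : Matrix (Fin t) (Fin p) ℂ), Vᴴ * (V * X) = X := fun X => by
    rw [← Matrix.mul_assoc, hV, Matrix.one_mul]
  have e3 : ∀ {p : ℕ} (X : Matrix (Fin k) (Fin p) ℂ), Uᴴ * (Up * X) = 0 := fun X => by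
    rw [← Matrix.mul_assoc, hUUp, Matrix.zero_mul]
  have e4 : ∀ {p : ℕ} (X : Matrix (Fin k) (Fin p) ℂ), Vᴴ * (Vp * X) = 0 := fun X => by
    rw [← Matrix.mul_assoc, hVVp, Matrix.zero_mul]
  have e5 : ∀ {p : ℕ} (X : Matrix (Fin t) (Fin p) ℂ), Upᴴ * (U * X) = 0 := fun X => by
    rw [← Matrix.mul_assoc, hUpU, Matrix.zero_mul]
  have e6 : ∀ {p : ℕ} (X : Matrix (Fin t) (Fin p) ℂ), Vpᴴ * (V * X) = 0 := fun X => by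
    rw [← Matrix.mul_assoc, hVpV, Matrix.zero_mul]
  subst hA hdA
  constructor <;>
  · simp only [Matrix.conjTranspose_add, Matrix.conjTranspose_mul,
      Matrix.conjTranspose_conjTranspose, hSH, hSpH,
      Matrix.add_mul, Matrix.mul_add, Matrix.sub_mul, Matrix.mul_sub,
      Matrix.one_mul, Matrix.mul_one, Matrix.mul_assoc,
      hU, hV, hUUp, hVVp, hUpU, hVpV, hdUpU', hdVpV', e1, e2, e3, e4, e5, e6,
      Matrix.zero_mul, Matrix.mul_zero, Matrix.mul_neg, Matrix.neg_mul]
    abel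
end

section
/- Under the truncated SVD setting for iterative solvers with the differential relation and the orthogonality-preserving conditions dU⊥†U + U⊥†dU = 0 and dV⊥†V + V⊥†dV = 0, the projected differential Ũ₂ = (1_n − U U†) dU solves the Sylvester equation Ũ₂ S² − A A† Ũ₂ = (1_n − U U†) dA V S + A (1_m − V V†)(dA)† U. -/
open Matrix

theorem stmt_13
    {n m t k : ℕ} (hn : 0 < n) (hm : 0 < m) (ht : 0 < t) (hk : 0 < k)
    (U : Matrix (Fin n) (Fin t) ℂ) (V : Matrix (Fin m) (Fin t) ℂ)
    (Up : Matrix (Fin n) (Fin k) ℂ) (Vp : Matrix (Fin m) (Fin k) ℂ)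
    (s : Fin t → ℝ) (sp : Fin k → ℝ)
    (S : Matrix (Fin t) (Fin t) ℂ) (Sp : Matrix (Fin k) (Fin k) ℂ)
    (A dA : Matrix (Fin n) (Fin m) ℂ)
    (dU : Matrix (Fin n) (Fin t) ℂ) (dV : Matrix (Fin m) (Fin t) ℂ)
    (dS : Matrix (Fin t) (Fin t) ℂ)
    (dUp : Matrix (Fin n) (Fin k) ℂ) (dVp : Matrix (Fin m) (Fin k) ℂ)
    (dSp : Matrix (Fin k) (Fin k) ℂ)
    (hU : Uᴴ * U = 1) (hV : Vᴴ * V = 1)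
    (hUUp : Uᴴ * Up = 0) (hVVp : Vᴴ * Vp = 0)
    (hS : S = Matrix.diagonal (fun i => (s i : ℂ)))
    (hSp : Sp = Matrix.diagonal (fun i => (sp i : ℂ)))
    (hA : A = U * S * Vᴴ + Up * Sp * Vpᴴ)
    (hdA : dA = dU * S * Vᴴ + U * dS * Vᴴ + U * S * dVᴴ
        + dUp * Sp * Vpᴴ + Up * dSp * Vpᴴ + Up * Sp * dVpᴴ)
    (hdUpU : dUpᴴ * U + Upᴴ * dU = 0)
    (hdVpV : dVpᴴ * V + Vpᴴ * dV = 0) :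
    ((1 - U * Uᴴ) * dU) * S ^ 2 - A * Aᴴ * ((1 - U * Uᴴ) * dU)
      = (1 - U * Uᴴ) * dA * V * S + A * ((1 - V * Vᴴ) * dAᴴ * U) := by

  have hSH : Sᴴ = S := by
    subst hS
    simp [Matrix.diagonal_conjTranspose, Pi.star_def, Complex.star_def, Complex.conj_ofReal]
  have hSpH : Spᴴ = Sp := by
    subst hSp
    simp [Matrix.diagonal_conjTranspose, Pi.star_def, Complex.star_def, Complex.conj_ofReal]
  have hUpU : Upᴴ * U = 0 := by
    have := congrArg Matrix.conjTranspose hUUp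
    simpa [Matrix.conjTranspose_mul] using this
  have hVpV : Vpᴴ * V = 0 := by
    have := congrArg Matrix.conjTranspose hVVp
    simpa [Matrix.conjTranspose_mul] using this
  have hdUpU' : dUpᴴ * U = -(Upᴴ * dU) := by
    rw [eq_neg_iff_add_eq_zero]; exact hdUpU
  have hdVpV' : dVpᴴ * V = -(Vpᴴ * dV) := by
    rw [eq_neg_iff_add_eq_zero]; exact hdVpV
  have hUdUp : Uᴴ * dUp = -(dUᴴ * Up) := by
    have := congrArg Matrix.conjTranspose hdUpU'
    simpa [Matrix.conjTranspose_mul] using this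
  have hVdVp : Vᴴ * dVp = -(dVᴴ * Vp) := by
    have := congrArg Matrix.conjTranspose hdVpV'
    simpa [Matrix.conjTranspose_mul] using this
  have e1 : ∀ (p : ℕ) (X : Matrix (Fin t) (Fin p) ℂ), Uᴴ * (U * X) = X := fun _ X => by
    rw [← Matrix.mul_assoc, hU, Matrix.one_mul]
  have e2 : ∀ (p : ℕ) (X : Matrix (Fin t) (Fin p) ℂ), Vᴴ * (V * X) = X := fun _ X => by
    rw [← Matrix.mul_assoc, hV, Matrix.one_mul]
  have e3 : ∀ (p : ℕ) (X : Matrix (Fin k) (Fin p) ℂ), Uᴴ * (Up * X) = 0 := fun _ X => by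
    rw [← Matrix.mul_assoc, hUUp, Matrix.zero_mul]
  have e4 : ∀ (p : ℕ) (X : Matrix (Fin k) (Fin p) ℂ), Vᴴ * (Vp * X) = 0 := fun _ X => by
    rw [← Matrix.mul_assoc, hVVp, Matrix.zero_mul]
  have e5 : ∀ (p : ℕ) (X : Matrix (Fin t) (Fin p) ℂ), Upᴴ * (U * X) = 0 := fun _ X => by
    rw [← Matrix.mul_assoc, hUpU, Matrix.zero_mul]
  have e6 : ∀ (p : ℕ) (X : Matrix (Fin t) (Fin p) ℂ), Vpᴴ * (V * X) = 0 := fun _ X => by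
    rw [← Matrix.mul_assoc, hVpV, Matrix.zero_mul]
  have e7 : ∀ (p : ℕ) (X : Matrix (Fin t) (Fin p) ℂ),
      dUpᴴ * (U * X) = -(Upᴴ * (dU * X)) := fun _ X => by
    rw [← Matrix.mul_assoc, hdUpU', Matrix.neg_mul, Matrix.mul_assoc]
  have e8 : ∀ (p : ℕ) (X : Matrix (Fin t) (Fin p) ℂ),
      dVpᴴ * (V * X) = -(Vpᴴ * (dV * X)) := fun _ X => by
    rw [← Matrix.mul_assoc, hdVpV', Matrix.neg_mul, Matrix.mul_assoc]
  have e9 : ∀ (p : ℕ) (X : Matrix (Fin k) (Fin p) ℂ),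
      Uᴴ * (dUp * X) = -(dUᴴ * (Up * X)) := fun _ X => by
    rw [← Matrix.mul_assoc, hUdUp, Matrix.neg_mul, Matrix.mul_assoc]
  have e10 : ∀ (p : ℕ) (X : Matrix (Fin k) (Fin p) ℂ),
      Vᴴ * (dVp * X) = -(dVᴴ * (Vp * X)) := fun _ X => by
    rw [← Matrix.mul_assoc, hVdVp, Matrix.neg_mul, Matrix.mul_assoc]
  subst hA hdA
  simp only [Matrix.conjTranspose_add, Matrix.conjTranspose_mul,
    Matrix.conjTranspose_conjTranspose, hSH, hSpH, pow_two,
    Matrix.sub_mul, Matrix.mul_sub, Matrix.add_mul, Matrix.mul_add,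
    Matrix.one_mul, Matrix.mul_one, Matrix.mul_assoc,
    e1, e2, e3, e4, e5, e6, e7, e8, e9, e10,
    hU, hV, hUUp, hVVp, hUpU, hVpV, hdUpU', hdVpV', hUdUp, hVdVp,
    Matrix.mul_zero, Matrix.zero_mul, Matrix.mul_neg, Matrix.neg_mul,
    add_zero, zero_add, neg_neg, sub_zero]
  abel
end

section
/- Under the truncated SVD setting for iterative solvers with the differential relation and the orthogonality-preserving conditions dU⊥†U + U⊥†dU = 0 and dV⊥†V + V⊥†dV = 0, if s_k ≠ 0 for every k, then the projected differential Ṽ₂ = (1_m − V V†) dV is recovered from Ũ₂ = (1_n − U U†) dU by Ṽ₂ = (1_m − V V†)(dA)† U S⁻¹ + A† Ũ₂ S⁻¹. -/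
open Matrix

theorem stmt_14
    {n m t k : ℕ} (hn : 0 < n) (hm : 0 < m) (ht : 0 < t) (hk : 0 < k)
    (U : Matrix (Fin n) (Fin t) ℂ) (V : Matrix (Fin m) (Fin t) ℂ)
    (Up : Matrix (Fin n) (Fin k) ℂ) (Vp : Matrix (Fin m) (Fin k) ℂ)
    (s : Fin t → ℝ) (sp : Fin k → ℝ)
    (S : Matrix (Fin t) (Fin t) ℂ) (Sp : Matrix (Fin k) (Fin k) ℂ)
    (A dA : Matrix (Fin n) (Fin m) ℂ)
    (dU : Matrix (Fin n) (Fin t) ℂ) (dV : Matrix (Fin m) (Fin t) ℂ)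
    (dS : Matrix (Fin t) (Fin t) ℂ)
    (dUp : Matrix (Fin n) (Fin k) ℂ) (dVp : Matrix (Fin m) (Fin k) ℂ)
    (dSp : Matrix (Fin k) (Fin k) ℂ)
    (hU : Uᴴ * U = 1) (hV : Vᴴ * V = 1)
    (hUUp : Uᴴ * Up = 0) (hVVp : Vᴴ * Vp = 0)
    (hS : S = Matrix.diagonal (fun i => (s i : ℂ)))
    (hSp : Sp = Matrix.diagonal (fun i => (sp i : ℂ)))
    (hA : A = U * S * Vᴴ + Up * Sp * Vpᴴ)
    (hdA : dA = dU * S * Vᴴ + U * dS * Vᴴ + U * S * dVᴴ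
        + dUp * Sp * Vpᴴ + Up * dSp * Vpᴴ + Up * Sp * dVpᴴ)
    (hdUpU : dUpᴴ * U + Upᴴ * dU = 0)
    (hdVpV : dVpᴴ * V + Vpᴴ * dV = 0)
    (hs : ∀ i, s i ≠ 0) :
    (1 - V * Vᴴ) * dV
      = (1 - V * Vᴴ) * dAᴴ * U * S⁻¹ + Aᴴ * ((1 - U * Uᴴ) * dU) * S⁻¹ := by
  have hSH : Sᴴ = S := by
    rw [hS]
    ext i j
    rcases eq_or_ne i j with h | h
    · subst h
      simp [Matrix.conjTranspose_apply, Matrix.diagonal_apply, Complex.star_def,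
        Complex.conj_ofReal]
    · simp [Matrix.conjTranspose_apply, Matrix.diagonal_apply, h, Ne.symm h]
  have hSpH : Spᴴ = Sp := by
    rw [hSp]
    ext i j
    rcases eq_or_ne i j with h | h
    · subst h
      simp [Matrix.conjTranspose_apply, Matrix.diagonal_apply, Complex.star_def,
        Complex.conj_ofReal]
    · simp [Matrix.conjTranspose_apply, Matrix.diagonal_apply, h, Ne.symm h]
  have hSinv : S * S⁻¹ = 1 := by
    apply Matrix.mul_nonsing_inv
    rw [hS, Matrix.det_diagonal]
    apply isUnit_iff_ne_zero.mpr
    exact Finset.prod_ne_zero_iff.mpr fun i _ => by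
      simpa using hs i
  have hUpU : Upᴴ * U = 0 := by
    have := congrArg Matrix.conjTranspose hUUp
    simpa [Matrix.conjTranspose_mul] using this
  have hVpV : Vpᴴ * V = 0 := by
    have := congrArg Matrix.conjTranspose hVVp
    simpa [Matrix.conjTranspose_mul] using this
  have hdUp : dUpᴴ * U = -(Upᴴ * dU) := by
    rw [eq_neg_iff_add_eq_zero]; exact hdUpU
  have hVV2 : ∀ {p : ℕ} (X : Matrix (Fin t) (Fin p) ℂ), Vᴴ * (V * X) = X :=
    fun X => by rw [← Matrix.mul_assoc, hV, Matrix.one_mul]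
  have hUU2 : ∀ {p : ℕ} (X : Matrix (Fin t) (Fin p) ℂ), Uᴴ * (U * X) = X :=
    fun X => by rw [← Matrix.mul_assoc, hU, Matrix.one_mul]
  have hVVp2 : ∀ {p : ℕ} (X : Matrix (Fin k) (Fin p) ℂ), Vᴴ * (Vp * X) = 0 :=
    fun X => by rw [← Matrix.mul_assoc, hVVp, Matrix.zero_mul]
  have hUUp2 : ∀ {p : ℕ} (X : Matrix (Fin k) (Fin p) ℂ), Uᴴ * (Up * X) = 0 :=
    fun X => by rw [← Matrix.mul_assoc, hUUp, Matrix.zero_mul]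
  have hVpV2 : ∀ {p : ℕ} (X : Matrix (Fin t) (Fin p) ℂ), Vpᴴ * (V * X) = 0 :=
    fun X => by rw [← Matrix.mul_assoc, hVpV, Matrix.zero_mul]
  have hUpU2 : ∀ {p : ℕ} (X : Matrix (Fin t) (Fin p) ℂ), Upᴴ * (U * X) = 0 :=
    fun X => by rw [← Matrix.mul_assoc, hUpU, Matrix.zero_mul]
  have key1 : (1 - V * Vᴴ) * dAᴴ * U
      = (1 - V * Vᴴ) * dV * S - Vp * Sp * (Upᴴ * dU) := by
    subst hdA
    simp only [Matrix.conjTranspose_add, Matrix.conjTranspose_mul,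
      Matrix.conjTranspose_conjTranspose, hSH, hSpH]
    simp only [Matrix.sub_mul, Matrix.add_mul, Matrix.mul_add, Matrix.one_mul,
      Matrix.mul_assoc, hU, hV, hUpU, hVpV, hUUp, hVVp, hdUp,
      hVV2, hUU2, hVVp2, hUUp2, hVpV2, hUpU2,
      Matrix.mul_one, Matrix.mul_zero, Matrix.zero_mul, add_zero, zero_add,
      Matrix.mul_neg, Matrix.neg_mul]
    abel
  have key2 : Aᴴ * ((1 - U * Uᴴ) * dU) = Vp * Sp * (Upᴴ * dU) := by
    subst hA
    simp only [Matrix.conjTranspose_add, Matrix.conjTranspose_mul,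
      Matrix.conjTranspose_conjTranspose, hSH, hSpH]
    simp only [Matrix.sub_mul, Matrix.add_mul, Matrix.mul_add, Matrix.one_mul,
      Matrix.mul_assoc, hU, hV, hUpU, hVpV, hUUp, hVVp, hVV2, hUU2, hVVp2, hUUp2, hVpV2, hUpU2,
      Matrix.mul_one, Matrix.mul_zero, Matrix.zero_mul, add_zero, zero_add,
      sub_zero, Matrix.mul_sub, sub_self]
    abel
  rw [key1, key2, Matrix.sub_mul ((1 - V * Vᴴ) * dV * S),
    Matrix.mul_assoc ((1 - V * Vᴴ) * dV) S S⁻¹, hSinv, Matrix.mul_one]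
  abel
end

section
/- Under the truncated eigenvalue decomposition setting, suppose λ and dλ are p×p diagonal matrices, γ is a p×p diagonal matrix with nonzero diagonal entries, and the kept-block differential relation ȳ dA x̄ γ − γ dλ = ȳ dx λ − λ ȳ dx holds. Then dλ is the diagonal part of ȳ dA x̄; that is, (dλ)_{kk} = (ȳ dA x̄)_{kk} for every index k, i.e. dλ = 1_p ∘ (ȳ dA x̄). -/
open Matrix

theorem stmt_17
    {n p : ℕ} (hn : 0 < n) (hp : 0 < p) (hpn : p < n)
    (xb : Matrix (Fin n) (Fin p) ℂ) (yb : Matrix (Fin p) (Fin n) ℂ)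
    (dA : Matrix (Fin n) (Fin n) ℂ) (dx : Matrix (Fin n) (Fin p) ℂ)
    (l dl g : Fin p → ℂ)
    (L dL G : Matrix (Fin p) (Fin p) ℂ)
    (hL : L = Matrix.diagonal l) (hdL : dL = Matrix.diagonal dl)
    (hG : G = Matrix.diagonal g) (hg : ∀ i, g i ≠ 0)
    (hrel : yb * dA * xb * G - G * dL = yb * dx * L - L * (yb * dx)) :
    (∀ k, dL k k = (yb * dA * xb) k k) ∧ dL = Matrix.hadamard 1 (yb * dA * xb) := by
  have key : ∀ k, dL k k = (yb * dA * xb) k k := by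
    intro k
    have h := congrFun (congrFun hrel k) k
    simp only [hG, hL, Matrix.sub_apply, Matrix.mul_diagonal, Matrix.diagonal_mul] at h
    have : g k * ((yb * dA * xb) k k - dL k k) = 0 := by ring_nf; ring_nf at h; linear_combination h
    rcases mul_eq_zero.mp this with h' | h'
    · exact absurd h' (hg k)
    · exact (sub_eq_zero.mp h').symm
  refine ⟨key, ?_⟩
  ext i j
  by_cases hij : i = j
  · subst hij
    simp [Matrix.hadamard, key i]
  · simp [hdL, Matrix.hadamard, Matrix.diagonal, hij, Matrix.one_apply, hij]
end

section
/- Under the truncated eigenvalue decomposition setting, suppose λ and dλ are p×p diagonal matrices, γ is a p×p matrix, the kept-block differential relation ȳ dA x̄ γ − γ dλ = ȳ dx λ − λ ȳ dx holds with γ dλ diagonal, and the kept eigenvalues are nondegenerate (λ_i ≠ λ_j for i ≠ j). Then for all indices i ≠ j the off-diagonal entries of ȳ dx satisfy (ȳ dx)_{ij} = (ȳ dA x̄ γ)_{ij} / (λ_j − λ_i). -/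
open Matrix

theorem stmt_18
    {n p : ℕ} (hn : 0 < n) (hp : 0 < p) (hpn : p < n)
    (xb : Matrix (Fin n) (Fin p) ℂ) (yb : Matrix (Fin p) (Fin n) ℂ)
    (dA : Matrix (Fin n) (Fin n) ℂ) (dx : Matrix (Fin n) (Fin p) ℂ)
    (l dl : Fin p → ℂ)
    (L dL G : Matrix (Fin p) (Fin p) ℂ)
    (hL : L = Matrix.diagonal l) (hdL : dL = Matrix.diagonal dl)
    (hGdL : (G * dL).IsDiag)
    (hrel : yb * dA * xb * G - G * dL = yb * dx * L - L * (yb * dx))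
    (hnd : ∀ i j : Fin p, i ≠ j → l i ≠ l j) :
    ∀ i j : Fin p, i ≠ j →
      (yb * dx) i j = (yb * dA * xb * G) i j / (l j - l i) := by
  intro i j hij
  have h := congrFun (congrFun hrel i) j
  have hz : (G * dL) i j = 0 := hGdL hij
  rw [Matrix.sub_apply, Matrix.sub_apply, hz, sub_zero, hL,
    Matrix.mul_diagonal, Matrix.diagonal_mul] at h
  have hne : l j - l i ≠ 0 := sub_ne_zero.mpr (hnd j i hij.symm)
  field_simp
  rw [h]
  ring
end

section
/- Under the full truncated eigenvalue decomposition setting, suppose the discarded-block differential relation ȳ⊥ dA x̄ γ = ȳ⊥ dx λ − λ⊥ ȳ⊥ dx holds. Then the projected differential d̃x₂ = (1_n − x̄ ȳ) dx solves the Sylvester equation (1_n − x̄ ȳ) dA x̄ γ = d̃x₂ λ − A d̃x₂. -/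
open Matrix

theorem stmt_19
    {n p : ℕ} (hn : 0 < n) (hp : 0 < p) (hpn : p < n)
    (xb : Matrix (Fin n) (Fin p) ℂ) (yb : Matrix (Fin p) (Fin n) ℂ)
    (xbp : Matrix (Fin n) (Fin (n - p)) ℂ) (ybp : Matrix (Fin (n - p)) (Fin n) ℂ)
    (l : Fin p → ℂ) (lp : Fin (n - p) → ℂ)
    (L : Matrix (Fin p) (Fin p) ℂ) (Lp : Matrix (Fin (n - p)) (Fin (n - p)) ℂ)
    (A dA : Matrix (Fin n) (Fin n) ℂ)
    (dx : Matrix (Fin n) (Fin p) ℂ) (G : Matrix (Fin p) (Fin p) ℂ)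
    (hyx : yb * xb = 1) (hypxp : ybp * xbp = 1)
    (hypx : ybp * xb = 0) (hyxp : yb * xbp = 0)
    (hcomplete : xb * yb + xbp * ybp = 1)
    (hL : L = Matrix.diagonal l) (hLp : Lp = Matrix.diagonal lp)
    (hAx : A * xb = xb * L) (hAxp : A * xbp = xbp * Lp)
    (hrel : ybp * dA * xb * G = ybp * dx * L - Lp * (ybp * dx)) :
    (1 - xb * yb) * dA * xb * G
      = ((1 - xb * yb) * dx) * L - A * ((1 - xb * yb) * dx) := by
  have hproj : (1 : Matrix (Fin n) (Fin n) ℂ) - xb * yb = xbp * ybp := by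
    rw [← hcomplete]; abel
  calc (1 - xb * yb) * dA * xb * G
      = xbp * (ybp * dA * xb * G) := by rw [hproj]; simp [Matrix.mul_assoc]
    _ = xbp * (ybp * dx * L - Lp * (ybp * dx)) := by rw [hrel]
    _ = (xbp * ybp * dx) * L - (xbp * Lp) * (ybp * dx) := by rw [Matrix.mul_sub]; simp [Matrix.mul_assoc]
    _ = ((1 - xb * yb) * dx) * L - A * ((1 - xb * yb) * dx) := by
        rw [← hAxp, hproj]; simp [Matrix.mul_assoc]
end
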